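/- Let M be a matrix over ℝ whose rows are indexed by a set R and columns by a set C with |C| ≤ |R|. If the bipartite graph on R ⊔ C with an edge (r,c) whenever M_{rc} ≠ 0 admits a matching covering C, then for a generic choice of the nonzero entries (i.e., outside a set of Lebesgue measure zero in the space of entry values), M has full column rank. -/

import Mathlib

/-!
With the nonzero entries as indeterminates, the square submatrix on the matched rows has a
nonzero determinant: evaluated at the indicator of the matching it is `det 1 = 1`. Wherever this
polynomial does not vanish, `M` has full column rank. The zero set of a nonzero real polynomial
is Lebesgue-null by induction on the number of variables: by Fubini it suffices that for almost
every value of the other variables the polynomial in one fixed variable is nonzero, which holds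
off the zero set of one of its coefficients.
-/

open Matrix MeasureTheory

namespace MvPolynomial

variable {σ : Type*} [Fintype σ]

lemma measurableSet_setOf_eval_eq_zero (P : MvPolynomial σ ℝ) :
    MeasurableSet {x : σ → ℝ | eval x P = 0} :=
  (isClosed_eq (continuous_eval P) continuous_const).measurableSet

lemma volume_setOf_eval_option_eq_zero
    (ih : ∀ P : MvPolynomial σ ℝ, P ≠ 0 → volume {x : σ → ℝ | eval x P = 0} = 0)
    {P : MvPolynomial (Option σ) ℝ} (hP : P ≠ 0) :
    volume {x : Option σ → ℝ | eval x P = 0} = 0 := by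
  set Q := optionEquivLeft ℝ σ P
  obtain ⟨k, hk⟩ : ∃ k, Q.coeff k ≠ 0 := by
    by_contra! h
    exact hP ((map_eq_zero_iff _ (AlgEquiv.injective _)).mp (Polynomial.ext h))
  let e := MeasurableEquiv.piOptionEquivProd (fun _ : Option σ => ℝ)
  have he : MeasurePreserving e volume volume :=
    MeasurePreserving.symm _ ⟨e.symm.measurable, Measure.pi_map_piOptionEquivProd _⟩
  set S := {p : (σ → ℝ) × ℝ | (Q.map (eval p.1)).eval p.2 = 0}
  have hpre : e ⁻¹' S = {x | eval x P = 0} := by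
    ext x
    have hx : (fun o => Option.elim o (x none) fun i => x (some i)) = x := by
      funext o; cases o <;> rfl
    have he_apply : e x = (fun i => x (some i), x none) := rfl
    simp only [Set.mem_preimage, Set.mem_ofPred_eq, he_apply, S, Q, ← optionEquivLeft_elim_eval, hx]
  have hS : MeasurableSet S := by
    rw [← e.measurableSet_preimage, hpre]
    exact measurableSet_setOf_eval_eq_zero P
  rw [← hpre, he.measure_preimage_equiv, Measure.volume_eq_prod]
  refine Measure.measure_prod_null_of_ae_null hS ?_
  filter_upwards [measure_eq_zero_iff_ae_notMem.mp (ih _ hk)] with y hy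
  have hQy : Q.map (eval y) ≠ 0 := fun h => hy (by simpa using congrArg (·.coeff k) h)
  exact (Polynomial.finite_setOfPred_isRoot hQy).measure_zero _

theorem volume_setOf_eval_eq_zero {P : MvPolynomial σ ℝ} (hP : P ≠ 0) :
    volume {x : σ → ℝ | eval x P = 0} = 0 := by
  revert P
  refine Fintype.induction_empty_option
    (P := fun σ _ => ∀ {P : MvPolynomial σ ℝ}, P ≠ 0 → volume {x : σ → ℝ | eval x P = 0} = 0)
    ?_ ?_ ?_ σ
  · intro α β _ e ih P hP
    let _ : Fintype α := .ofEquiv β e.symm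
    have hrename : rename e.symm P ≠ 0 := fun h =>
      hP (rename_injective _ e.symm.injective (by rwa [map_zero]))
    have hpre : MeasurableEquiv.arrowCongr' e (.refl ℝ) ⁻¹' {x | eval x P = 0} =
        {x | eval x (rename e.symm P) = 0} := by
      ext x
      simp only [Set.mem_preimage, Set.mem_ofPred_eq, eval_rename]
      rfl
    rw [← (volume_preserving_arrowCongr' e (.refl ℝ) (.id volume)).measure_preimage_equiv, hpre]
    exact ih hrename
  · intro P hP
    obtain ⟨a, rfl⟩ := C_surjective PEmpty P
    have ha : a ≠ 0 := by rintro rfl; exact hP C_0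
    simp [ha]
  · intro σ _ ih P hP
    exact volume_setOf_eval_option_eq_zero (fun _ => ih) hP

end MvPolynomial

namespace Matrix

variable {R C K : Type*}

lemma mulVec_injective_of_det_submatrix_ne_zero [Fintype C] [DecidableEq C] [CommRing K]
    [NoZeroDivisors K] {A : Matrix R C K} {m : C → R} (h : (A.submatrix m id).det ≠ 0) :
    Function.Injective A.mulVec := fun _ _ huv =>
  mulVec_injective_of_det_ne_zero h (congrArg (· ∘ m) huv)

noncomputable def patternMatrix (K : Type*) [CommSemiring K] (Z : R → C → Prop)
    [∀ r c, Decidable (Z r c)] :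
    Matrix R C (MvPolynomial {p : R × C // Z p.1 p.2} K) :=
  of fun r c => if h : Z r c then .X ⟨(r, c), h⟩ else 0

lemma map_eval_patternMatrix [CommSemiring K] (Z : R → C → Prop) [∀ r c, Decidable (Z r c)]
    (a : {p : R × C // Z p.1 p.2} → K) (r : R) (c : C) :
    (patternMatrix K Z).map (MvPolynomial.eval a) r c =
      if h : Z r c then a ⟨(r, c), h⟩ else 0 := by
  simp only [patternMatrix, map_apply, of_apply]
  split_ifs <;> simp

lemma det_submatrix_patternMatrix_ne_zero [Fintype C] [DecidableEq C] [CommRing K] [Nontrivial K]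
    {Z : R → C → Prop} [∀ r c, Decidable (Z r c)] {m : C → R} (hm : Function.Injective m)
    (hcov : ∀ c, Z (m c) c) : ((patternMatrix K Z).submatrix m id).det ≠ 0 := by
  classical
  let a : {p : R × C // Z p.1 p.2} → K := fun p => if p.1.1 = m p.1.2 then 1 else 0
  have hmatching : ((patternMatrix K Z).submatrix m id).map (MvPolynomial.eval a) = 1 := by
    ext c' c
    rw [← submatrix_map, submatrix_apply, map_eval_patternMatrix, one_apply, id]
    by_cases hcc : c' = c
    · subst hcc
      simp [hcov, a]
    · simp [hcc, hm.ne hcc, a]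
  have heval : MvPolynomial.eval a ((patternMatrix K Z).submatrix m id).det = 1 := by
    rw [RingHom.map_det, RingHom.mapMatrix_apply, hmatching, det_one]
  intro h
  simp [h] at heval

end Matrix

theorem stmt_6_general (R C : Type) [Fintype R] [Fintype C]
    (Z : R → C → Prop) [∀ r c, Decidable (Z r c)]
    (m : C → R) (hm : Function.Injective m) (hcov : ∀ c, Z (m c) c)
    (M : ({p : R × C // Z p.1 p.2} → ℝ) → Matrix R C ℝ)
    (hM : ∀ a r c, M a r c = if h : Z r c then a ⟨(r, c), h⟩ else 0) :
    volume {a : {p : R × C // Z p.1 p.2} → ℝ |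
      ¬ Function.Injective (M a).mulVec} = 0 := by
  classical
  have hM_eval : ∀ a, M a = (patternMatrix ℝ Z).map (MvPolynomial.eval a) := fun a => by
    ext r c; rw [hM, map_eval_patternMatrix]
  refine measure_mono_null (fun a ha => ?_) (MvPolynomial.volume_setOf_eval_eq_zero
    (det_submatrix_patternMatrix_ne_zero (K := ℝ) hm hcov))
  by_contra hdet
  refine ha (hM_eval a ▸ mulVec_injective_of_det_submatrix_ne_zero (m := m) ?_)
  rwa [submatrix_map, ← RingHom.mapMatrix_apply, ← RingHom.map_det]

/-- If the zero pattern of M admits a matching covering the columns, then for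
almost every (Lebesgue) choice of the nonzero entries, M has full column rank. -/
theorem stmt_6 (R C : Type) [Fintype R] [Fintype C] [DecidableEq R] [DecidableEq C]
    (hcard : Fintype.card C ≤ Fintype.card R)
    (Z : R → C → Prop) [∀ r c, Decidable (Z r c)]
    (m : C → R) (hm : Function.Injective m) (hcov : ∀ c, Z (m c) c)
    (M : ({p : R × C // Z p.1 p.2} → ℝ) → Matrix R C ℝ)
    (hM : ∀ a r c, M a r c = if h : Z r c then a ⟨(r, c), h⟩ else 0) :
    volume {a : {p : R × C // Z p.1 p.2} → ℝ |
      ¬ Function.Injective (M a).mulVec} = 0 :=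
  stmt_6_general R C Z m hm hcov M hM
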